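/- arXiv:2112.10562 — 2 statements merged into one kernel-verified Lean document; each statement's English description precedes it below -/
import Mathlib

section
/- Fix r ≥ 2. Let φ be a satisfiable instance of 2-Clause 3-SAT and let G(φ) be the graph with one clause vertex u_i per clause, adjacent literal-pair vertices v_j, v'_j per variable, an (r−1)-subdivided edge from u_i to each literal vertex whose literal occurs in c_i, a 7-clique w_1,…,w_7, edges from each u_i to w_1,…,w_4 (plus w_5 if c_i has only 2 literals), edges from each v_j to w_2, w_3, w_4, and edges from each v'_j to w_5, w_6, w_7. Then col_r(G(φ)) ≤ 6. -/
/-!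
Order the vertices in levels: first the subdivision vertices, each subdivided edge listed
from its clause end; then the literal vertices made true by a satisfying assignment `A`; the
clause vertices; the false literal vertices; and last the clique. A vertex `a` reaches `z`
only along a path whose inner vertices precede `a`, and any function on the vertices that
grows by at most one along the edges leaving such vertices bounds the length of those paths
from below. Leaving a literal pair or a clause vertex other than through the clique costs a
whole subdivided edge, of length `r`. Hence a clause vertex reaches only its clique
neighbours and its false literals (at most 4 + 2 or 5 + 1, as some literal is true), a true
literal its partner, 3 clique vertices and the 2 clauses containing it, a false literal the
6 clique vertices adjacent to it or to its partner, a subdivision vertex its two ends and its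
successor, and a clique vertex the later clique vertices.
-/

open SimpleGraph

variable {V : Type*}

/-- The strict order relation of a linear order. -/
def olt (σ : LinearOrder V) (a b : V) : Prop := σ.lt a b

/-- The set of vertices `r`-reachable from `u` with respect to `σ`:
vertices `v >_σ u` joined to `u` by a path of length at most `r`
whose internal vertices all precede `u` in `σ`. -/
def reachSet (G : SimpleGraph V) (σ : LinearOrder V) (r : ℕ) (u : V) : Set V :=
  {v | olt σ u v ∧ ∃ p : G.Walk u v, p.IsPath ∧ p.length ≤ r ∧
    ∀ w ∈ p.support, w ≠ u → w ≠ v → olt σ w u}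

/-- The set of vertices weakly `r`-reachable from `u` with respect to `σ`:
vertices `v >_σ u` joined to `u` by a path of length at most `r`
whose internal vertices all precede `v` in `σ`. -/
def wreachSet (G : SimpleGraph V) (σ : LinearOrder V) (r : ℕ) (u : V) : Set V :=
  {v | olt σ u v ∧ ∃ p : G.Walk u v, p.IsPath ∧ p.length ≤ r ∧
    ∀ w ∈ p.support, w ≠ u → w ≠ v → olt σ w v}

/-- `col_r(G_σ)`: the maximum `r`-reach over all vertices. -/
noncomputable def colOrd [Fintype V] (G : SimpleGraph V) (σ : LinearOrder V) (r : ℕ) : ℕ :=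
  Finset.univ.sup fun u => (reachSet G σ r u).ncard

/-- `wcol_r(G_σ)`: the maximum weak `r`-reach over all vertices. -/
noncomputable def wcolOrd [Fintype V] (G : SimpleGraph V) (σ : LinearOrder V) (r : ℕ) : ℕ :=
  Finset.univ.sup fun u => (wreachSet G σ r u).ncard

/-- The `r`-coloring number of `G`. -/
noncomputable def colNum [Fintype V] (G : SimpleGraph V) (r : ℕ) : ℕ :=
  ⨅ σ : LinearOrder V, colOrd G σ r

/-- The weak `r`-coloring number of `G`. -/
noncomputable def wcolNum [Fintype V] (G : SimpleGraph V) (r : ℕ) : ℕ :=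
  ⨅ σ : LinearOrder V, wcolOrd G σ r

/-- `p` is an `r`-qualifying path from `u` with respect to the (possibly partial)
order `lt`: a path of length at most `r` ending at a vertex `v` with `v ≠ u`,
`v` not `<` `u`, all of whose internal vertices are `< u`. -/
def IsQual (G : SimpleGraph V) (lt : V → V → Prop) (r : ℕ) {u v : V} (p : G.Walk u v) : Prop :=
  p.IsPath ∧ p.length ≤ r ∧ v ≠ u ∧ ¬ lt v u ∧ ∀ w ∈ p.support, w ≠ u → w ≠ v → lt w u

/-- The `r`-backconnectivity of `u`: the maximum number of `r`-qualifying paths from `u`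
that are pairwise vertex-disjoint apart from `u`. -/
noncomputable def bcon (G : SimpleGraph V) (lt : V → V → Prop) (r : ℕ) (u : V) : ℕ :=
  sSup {n | ∃ f : Fin n → (v : V) × G.Walk u v,
    (∀ i, IsQual G lt r (f i).2) ∧
    ∀ i j : Fin n, i ≠ j → ∀ w, w ∈ (f i).2.support → w ∈ (f j).2.support → w = u}

/-- A shortest `r`-qualifying path: an `r`-qualifying `u`–`v` path of length `ℓ` such that
there is no `(ℓ-1)`-qualifying `u`–`v` path. -/
def IsShortQual (G : SimpleGraph V) (lt : V → V → Prop) (r : ℕ) {u v : V} (p : G.Walk u v) :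
    Prop :=
  IsQual G lt r p ∧ ¬ ∃ q : G.Walk u v, IsQual G lt (p.length - 1) q

/-- The estimated `r`-backconnectivity of `u`: the maximum number of shortest
`r`-qualifying paths from `u` that are pairwise vertex-disjoint apart from `u`. -/
noncomputable def est (G : SimpleGraph V) (lt : V → V → Prop) (r : ℕ) (u : V) : ℕ :=
  sSup {n | ∃ f : Fin n → (v : V) × G.Walk u v,
    (∀ i, IsShortQual G lt r (f i).2) ∧
    ∀ i j : Fin n, i ≠ j → ∀ w, w ∈ (f i).2.support → w ∈ (f j).2.support → w = u}

/-- The `r`-admissibility of `G`. -/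
noncomputable def admNum [Fintype V] (G : SimpleGraph V) (r : ℕ) : ℕ :=
  ⨅ σ : LinearOrder V, Finset.univ.sup fun u => bcon G (olt σ) r u

/-- `d_v(u, G_σ)`: the least `i` such that `v` is `i`-reachable from `u`. -/
noncomputable def dval (G : SimpleGraph V) (σ : LinearOrder V) (u v : V) : ℕ :=
  sInf {i | v ∈ reachSet G σ i u}


/-- An instance of 2-Clause 3-SAT: a CNF formula where every clause has at most 3
(distinct) variables, no clause repeats a variable, every clause has at least 2 literals
(single-literal clauses are assumed preprocessed), and each literal (a variable together
with a polarity) appears in exactly 2 clauses. -/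
structure TC3SAT where
  n : ℕ
  m : ℕ
  clauses : Fin m → Finset (Fin n × Bool)
  vars_distinct : ∀ i, ∀ l ∈ clauses i, ∀ l' ∈ clauses i, l.1 = l'.1 → l = l'
  clause_le_three : ∀ i, (clauses i).card ≤ 3
  clause_ge_two : ∀ i, 2 ≤ (clauses i).card
  lit_twice : ∀ l : Fin n × Bool, (Finset.univ.filter fun i => l ∈ clauses i).card = 2

/-- The assignment `A` satisfies the formula `φ`. -/
def TC3SAT.Sat (φ : TC3SAT) (A : Fin φ.n → Bool) : Prop :=
  ∀ i, ∃ l ∈ φ.clauses i, A l.1 = l.2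

/-- The formula `φ` is satisfiable. -/
def TC3SAT.Satisfiable (φ : TC3SAT) : Prop := ∃ A, φ.Sat A

/-- Vertices of the `r`-coloring-number reduction graph `G(φ)`: one clause vertex `u i`
per clause, a pair of literal vertices per variable (`v j true` is `v_j`, `v j false` is
`v'_j`), seven clique vertices `w 0, …, w 6` (representing `w_1, …, w_7`), and for each
occurrence `occ` of a literal in a clause, the `r - 1` internal vertices `s occ t` of the
`(r-1)`-subdivided edge between the clause vertex and the literal vertex. -/
inductive VtxC (r : ℕ) (φ : TC3SAT) where
  | u (i : Fin φ.m)
  | v (j : Fin φ.n) (b : Bool)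
  | w (t : Fin 7)
  | s (occ : Σ i : Fin φ.m, {l : Fin φ.n × Bool // l ∈ φ.clauses i}) (t : Fin (r - 1))
  deriving DecidableEq, Fintype

/-- Base relation of the reduction graph: the subdivided edges are realized as paths
`u — s 0 — ⋯ — s (r-2) — v`; `w 0, …, w 6` form a clique; each clause vertex is joined to
`w 0, …, w 3` (and to `w 4` if its clause has only 2 literals); each positive literal
vertex `v_j` is joined to `w 1, w 2, w 3` and each negative literal vertex `v'_j` to
`w 4, w 5, w 6`. -/
def relC (r : ℕ) (φ : TC3SAT) : VtxC r φ → VtxC r φ → Prop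
  | .u i, .s occ t => occ.1 = i ∧ (t : ℕ) = 0
  | .s occ t, .s occ' t' => occ = occ' ∧ (t' : ℕ) = (t : ℕ) + 1
  | .s occ t, .v j b => occ.2.1 = (j, b) ∧ (t : ℕ) + 1 = r - 1
  | .v j _, .v j' _ => j = j'
  | .w _, .w _ => True
  | .u i, .w t => (t : ℕ) ≤ 3 ∨ ((t : ℕ) = 4 ∧ (φ.clauses i).card = 2)
  | .v _ b, .w t =>
      (b = true ∧ 1 ≤ (t : ℕ) ∧ (t : ℕ) ≤ 3) ∨ (b = false ∧ 4 ≤ (t : ℕ) ∧ (t : ℕ) ≤ 6)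
  | _, _ => False

/-- The reduction graph `G(φ)` for the `r`-coloring number. -/
def GC (r : ℕ) (φ : TC3SAT) : SimpleGraph (VtxC r φ) := SimpleGraph.fromRel (relC r φ)

theorem SimpleGraph.Walk.le_add_length_of_lipschitz {G : SimpleGraph V} {S : Set V} {f : V → ℕ}
    (hf : ∀ x y, G.Adj x y → x ∈ S → f y ≤ f x + 1) :
    ∀ {x z : V} (p : G.Walk x z), (∀ w ∈ p.support, w ≠ z → w ∈ S) → f z ≤ f x + p.length
  | _, _, .nil, _ => by simp
  | x, z, .cons h q, hp => by
    by_cases hxz : x = z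
    · subst hxz
      omega
    · have hxy := hf _ _ h (hp x (by simp) hxz)
      have hq := le_add_length_of_lipschitz hf q fun w hw => hp w (by simp [hw])
      rw [length_cons]
      omega

theorem reachSet_subset_of_lipschitz {G : SimpleGraph V} {σ : LinearOrder V} {r : ℕ} {a : V}
    {f : V → ℕ} (hf : ∀ x y, G.Adj x y → (x = a ∨ olt σ x a) → f y ≤ f x + 1) :
    reachSet G σ r a ⊆ {z | olt σ a z ∧ f z ≤ f a + r} := by
  rintro z ⟨haz, p, -, hlen, hint⟩
  have hpot := p.le_add_length_of_lipschitz (S := {x | x = a ∨ olt σ x a}) hf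
    fun w hw hwz => or_iff_not_imp_left.2 fun hwa => hint w hw hwa hwz
  exact ⟨haz, by omega⟩

namespace TC3SAT

abbrev Occ (φ : TC3SAT) := Σ i : Fin φ.m, {l : Fin φ.n × Bool // l ∈ φ.clauses i}

def clauseCliqueNbrs (φ : TC3SAT) (i : Fin φ.m) : Finset (Fin 7) :=
  Finset.univ.filter fun t => (t : ℕ) ≤ 3 ∨ ((t : ℕ) = 4 ∧ (φ.clauses i).card = 2)

end TC3SAT

def litCliqueNbrs (b : Bool) : Finset (Fin 7) :=
  Finset.univ.filter fun t =>
    (b = true ∧ 1 ≤ (t : ℕ) ∧ (t : ℕ) ≤ 3) ∨ (b = false ∧ 4 ≤ (t : ℕ) ∧ (t : ℕ) ≤ 6)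

lemma card_litCliqueNbrs (b : Bool) : (litCliqueNbrs b).card = 3 := by
  cases b <;> rfl

lemma TC3SAT.card_clauseCliqueNbrs (φ : TC3SAT) (i : Fin φ.m) :
    (φ.clauseCliqueNbrs i).card = if (φ.clauses i).card = 2 then 5 else 4 := by
  unfold TC3SAT.clauseCliqueNbrs
  split_ifs with h <;> simp only [h] <;> rfl

namespace GC

variable {r : ℕ} {φ : TC3SAT}

lemma adj_u_w_iff {i : Fin φ.m} {t : Fin 7} :
    (GC r φ).Adj (.u i) (.w t) ↔ t ∈ φ.clauseCliqueNbrs i := by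
  simp [GC, relC, TC3SAT.clauseCliqueNbrs]

lemma adj_v_w_iff {j : Fin φ.n} {b : Bool} {t : Fin 7} :
    (GC r φ).Adj (.v j b) (.w t) ↔ t ∈ litCliqueNbrs b := by
  simp [GC, relC, litCliqueNbrs]

lemma adj_u_cases {i : Fin φ.m} {y : VtxC r φ} (h : (GC r φ).Adj (.u i) y) :
    (∃ (occ : φ.Occ) (k : Fin (r - 1)), occ.1 = i ∧ (k : ℕ) = 0 ∧ y = .s occ k) ∨
      ∃ t ∈ φ.clauseCliqueNbrs i, y = .w t := by
  cases y with
  | w t => exact .inr ⟨t, adj_u_w_iff.1 h, rfl⟩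
  | s occ k =>
    obtain ⟨-, h | h⟩ := h <;> simp only [relC] at h
    exact .inl ⟨occ, k, h.1, h.2, rfl⟩
  | u => obtain ⟨-, h | h⟩ := h <;> simp only [relC] at h
  | v => obtain ⟨-, h | h⟩ := h <;> simp only [relC] at h

lemma adj_s_cases {occ : φ.Occ} {k : Fin (r - 1)} {y : VtxC r φ}
    (h : (GC r φ).Adj (.s occ k) y) :
    ((k : ℕ) = 0 ∧ y = .u occ.1) ∨
      (∃ k' : Fin (r - 1), ((k' : ℕ) = k + 1 ∨ (k : ℕ) = k' + 1) ∧ y = .s occ k') ∨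
      ((k : ℕ) + 1 = r - 1 ∧ y = .v occ.2.1.1 occ.2.1.2) := by
  obtain ⟨-, h | h⟩ := h <;> cases y <;> simp only [relC] at h
  · obtain ⟨hl, h⟩ := h
    exact .inr (.inr ⟨h, by rw [hl]⟩)
  · obtain ⟨rfl, h⟩ := h
    exact .inr (.inl ⟨_, .inl h, rfl⟩)
  · obtain ⟨rfl, h⟩ := h
    exact .inl ⟨h, rfl⟩
  · obtain ⟨rfl, h⟩ := h
    exact .inr (.inl ⟨_, .inr h, rfl⟩)

lemma adj_v_cases {j : Fin φ.n} {b : Bool} {y : VtxC r φ} (h : (GC r φ).Adj (.v j b) y) :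
    y = .v j !b ∨ (∃ t ∈ litCliqueNbrs b, y = .w t) ∨
      ∃ (occ : φ.Occ) (k : Fin (r - 1)), occ.2.1 = (j, b) ∧ (k : ℕ) + 1 = r - 1 ∧ y = .s occ k := by
  cases y with
  | w t => exact .inr (.inl ⟨t, adj_v_w_iff.1 h, rfl⟩)
  | v j' b' =>
    obtain ⟨hne, h | h⟩ := h <;> simp only [relC] at h <;> subst h <;>
      cases b <;> cases b' <;> simp_all
  | s occ k =>
    obtain ⟨-, h | h⟩ := h <;> simp only [relC] at h
    exact .inr (.inr ⟨occ, k, h.1, h.2, rfl⟩)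
  | u => obtain ⟨-, h | h⟩ := h <;> simp only [relC] at h

end GC

section ColoringOrder

variable {r : ℕ} {φ : TC3SAT} {A : Fin φ.n → Bool}

def rank (A : Fin φ.n → Bool) : VtxC r φ → ℕ
  | .s _ k => k
  | .v j b => if A j = b then r else r + 2
  | .u _ => r + 1
  | .w _ => r + 3

noncomputable abbrev satOrder (r : ℕ) (A : Fin φ.n → Bool) : LinearOrder (VtxC r φ) :=
  LinearOrder.lift' (fun x => toLex (rank A x, Fintype.equivFin (VtxC r φ) x))
    fun _ _ h => (Fintype.equivFin _).injective (congrArg (fun p => (ofLex p).2) h)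

lemma rank_le_of_olt {x y : VtxC r φ} (h : olt (satOrder r A) x y) : rank A x ≤ rank A y := by
  let _ := satOrder r A
  exact Prod.Lex.monotone_fst _ _ h.le

/-- `f` bounds from below the length of a path from `a` whose inner vertices have rank at
most that of `a`; the value `r + 1` marks vertices that `a` cannot reach. -/
lemma ncard_reachSet_satOrder_le {a : VtxC r φ} {f : VtxC r φ → ℕ}
    (hf : ∀ x y, (GC r φ).Adj x y → rank A x ≤ rank A a → f y ≤ f x + 1) (ha : f a = 0)
    {T : Finset (VtxC r φ)} (hT : ∀ z, rank A a ≤ rank A z → z ≠ a → f z ≤ r → z ∈ T) :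
    (reachSet (GC r φ) (satOrder r A) r a).ncard ≤ T.card := by
  have hsub := reachSet_subset_of_lipschitz (σ := satOrder r A) (r := r) fun x y hxy hx =>
    hf x y hxy (hx.elim (fun h => h ▸ le_rfl) rank_le_of_olt)
  rw [← Set.ncard_coe_finset]
  refine Set.ncard_le_ncard fun z hz => ?_
  obtain ⟨haz, hfz⟩ := hsub hz
  refine hT z (rank_le_of_olt haz) ?_ (by simpa [ha] using hfz)
  rintro rfl
  let _ := satOrder r A
  exact lt_irrefl z haz

lemma ncard_reachSet_w_le_six (t : Fin 7) :
    (reachSet (GC r φ) (satOrder r A) r (.w t)).ncard ≤ 6 := by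
  refine (ncard_reachSet_satOrder_le (f := fun _ => 0) (T := (Finset.univ.erase t).image .w)
    (by simp) rfl fun z hrank hne _ => ?_).trans ?_
  · cases z with
    | w t' => simpa [eq_comm] using fun h => hne (by rw [h])
    | s occ k => have := k.isLt; simp only [rank] at hrank; omega
    | _ => simp only [rank] at hrank; (try split_ifs at hrank) <;> omega
  · exact Finset.card_image_le.trans (by simp)

def subdivPot (occ : φ.Occ) (t : ℕ) : VtxC r φ → ℕ
  | .s occ' k => if occ' = occ ∧ (k : ℕ) ≤ t + 1 then k - t else r + 1
  | .u i => if i = occ.1 then 1 else r + 1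
  | .v j b => if (j, b) = occ.2.1 then 1 else r + 1
  | .w _ => r + 1

lemma subdivPot_le (occ : φ.Occ) (t : ℕ) (x : VtxC r φ) : subdivPot occ t x ≤ r + 1 := by
  cases x <;> simp only [subdivPot] <;> (try split_ifs) <;> omega

lemma subdivPot_lipschitz (occ : φ.Occ) (t : Fin (r - 1)) (x y : VtxC r φ)
    (hxy : (GC r φ).Adj x y) (hx : rank A x ≤ rank A (.s occ t)) :
    subdivPot occ t y ≤ subdivPot occ t x + 1 := by
  have ht := t.isLt
  cases x with
  | s occ' k =>
    simp only [rank] at hx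
    by_cases ho : occ' = occ
    · subst ho
      rcases GC.adj_s_cases hxy with ⟨-, rfl⟩ | ⟨k', hk', rfl⟩ | ⟨-, rfl⟩ <;>
        simp only [subdivPot, true_and, ↓reduceIte] <;> split_ifs <;> omega
    · exact (subdivPot_le occ t y).trans (by simp [subdivPot, ho])
  | _ => simp only [rank] at hx; (try split_ifs at hx) <;> omega

lemma ncard_reachSet_s_le_three (occ : φ.Occ) (t : Fin (r - 1)) :
    (reachSet (GC r φ) (satOrder r A) r (.s occ t)).ncard ≤ 3 := by
  refine (ncard_reachSet_satOrder_le (subdivPot_lipschitz occ t) (by simp [subdivPot])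
    (T := {.u occ.1, .v occ.2.1.1 occ.2.1.2} ∪
      (Finset.univ.filter fun k : Fin (r - 1) => (k : ℕ) = t + 1).image (.s occ))
    fun z hrank hne hz => ?_).trans ?_
  · cases z with
    | s occ' k =>
      simp only [subdivPot] at hz
      split_ifs at hz with h
      · obtain ⟨rfl, hk⟩ := h
        have hkt : (t : ℕ) ≠ k := fun h => hne (by rw [Fin.ext h])
        simp only [rank] at hrank
        simp
        omega
      · omega
    | u i =>
      simp only [subdivPot] at hz
      split_ifs at hz with h
      · simp [h]
      · omega
    | v j b =>
      simp only [subdivPot] at hz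
      split_ifs at hz with h
      · simp [← h]
      · omega
    | w => simp only [subdivPot] at hz; omega
  · have hsucc : (Finset.univ.filter fun k : Fin (r - 1) => (k : ℕ) = t + 1).card ≤ 1 :=
      Finset.card_le_one.2 fun a ha b hb => by simp at ha hb; omega
    exact (Finset.card_union_le _ _).trans
      (add_le_add Finset.card_le_two (Finset.card_image_le.trans hsucc))

def trueLitPot (j : Fin φ.n) (b : Bool) : VtxC r φ → ℕ
  | .s occ _ => if occ.2.1 = (j, b) then 0 else r + 1
  | .u i => if (j, b) ∈ φ.clauses i then 1 else r + 1
  | .v j' b' => if j' = j then (if b' = b then 0 else 1) else r + 1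
  | .w t => if t ∈ litCliqueNbrs b then 1 else r + 1

lemma trueLitPot_le (j : Fin φ.n) (b : Bool) (x : VtxC r φ) : trueLitPot j b x ≤ r + 1 := by
  cases x <;> simp only [trueLitPot] <;> split_ifs <;> omega

lemma trueLitPot_lipschitz {j : Fin φ.n} {b : Bool} (hA : A j = b) (x y : VtxC r φ)
    (hxy : (GC r φ).Adj x y) (hx : rank A x ≤ rank A (.v j b : VtxC r φ)) :
    trueLitPot j b y ≤ trueLitPot j b x + 1 := by
  have hy := trueLitPot_le j b y
  cases x <;> simp only [rank, hA, ↓reduceIte] at hx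
  case s occ k =>
    by_cases ho : occ.2.1 = (j, b)
    · rcases GC.adj_s_cases hxy with ⟨-, rfl⟩ | ⟨k', -, rfl⟩ | ⟨-, rfl⟩
      · simp [trueLitPot, ← ho, occ.2.2]
      · simp [trueLitPot, ho]
      · simp [trueLitPot, ho]
    · exact hy.trans (by simp [trueLitPot, ho])
  case v j' b' =>
    split_ifs at hx with hb
    · by_cases hj : j' = j
      · subst hj
        obtain rfl : b' = b := hb ▸ hA
        rcases GC.adj_v_cases hxy with rfl | ⟨t, ht, rfl⟩ | ⟨occ, k, ho, -, rfl⟩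
        · simp [trueLitPot]
        · simp [trueLitPot, ht]
        · simp [trueLitPot, ho]
      · exact hy.trans (by simp [trueLitPot, hj])
    · omega
  all_goals omega

lemma ncard_reachSet_v_le_six_of_eq {j : Fin φ.n} {b : Bool} (hA : A j = b) :
    (reachSet (GC r φ) (satOrder r A) r (.v j b)).ncard ≤ 6 := by
  refine (ncard_reachSet_satOrder_le (trueLitPot_lipschitz hA) (by simp [trueLitPot])
    (T := insert (.v j !b) ((litCliqueNbrs b).image .w ∪
      (Finset.univ.filter fun i => (j, b) ∈ φ.clauses i).image .u))
    fun z hrank hne hz => ?_).trans ?_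
  · simp only [rank, hA, ↓reduceIte] at hrank
    cases z with
    | s occ k => have := k.isLt; simp only at hrank; omega
    | u i =>
      simp only [trueLitPot] at hz
      split_ifs at hz with h
      · simp [h]
      · omega
    | v j' b' =>
      simp only [trueLitPot] at hz
      split_ifs at hz with hj hb
      · exact absurd (by rw [hj, hb]) hne
      · subst hj
        cases b <;> cases b' <;> simp_all
      · omega
    | w t =>
      simp only [trueLitPot] at hz
      split_ifs at hz with h
      · simp [h]
      · omega
  · have hW := (Finset.card_image_le (f := (.w : Fin 7 → VtxC r φ))).trans
      (card_litCliqueNbrs b).le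
    have hU := (Finset.card_image_le (f := (.u : Fin φ.m → VtxC r φ))).trans
      (φ.lit_twice (j, b)).le
    have := Finset.card_union_le ((litCliqueNbrs b).image (.w : Fin 7 → VtxC r φ))
      ((Finset.univ.filter fun i => (j, b) ∈ φ.clauses i).image .u)
    exact (Finset.card_insert_le _ _).trans (by omega)

def falseLitPot (j : Fin φ.n) (b : Bool) : VtxC r φ → ℕ
  | .s occ k => if occ.2.1 = (j, b) then r - 1 - k else if occ.2.1 = (j, !b) then r - k else r
  | .u i => if (j, b) ∈ φ.clauses i then r else r + 1
  | .v j' b' => if j' = j then (if b' = b then 0 else 1) else r + 1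
  | .w t => if t ∈ litCliqueNbrs b then 1 else if t ∈ litCliqueNbrs !b then 2 else r + 1

lemma falseLitPot_le (hr : 0 < r) (j : Fin φ.n) (b : Bool) (x : VtxC r φ) :
    falseLitPot j b x ≤ r + 1 := by
  cases x <;> simp only [falseLitPot] <;> split_ifs <;> omega

lemma falseLitPot_lipschitz (hr : 0 < r) (j : Fin φ.n) (b : Bool) (x y : VtxC r φ)
    (hxy : (GC r φ).Adj x y) (hx : rank A x ≤ rank A (.v j b : VtxC r φ)) :
    falseLitPot j b y ≤ falseLitPot j b x + 1 := by
  have hy := falseLitPot_le hr j b y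
  cases x with
  | s occ k =>
    obtain ⟨i, ⟨j', b'⟩, hmem⟩ := occ
    have hk := k.isLt
    rcases GC.adj_s_cases hxy with ⟨hk0, rfl⟩ | ⟨k', hk', rfl⟩ | ⟨hk1, rfl⟩
    · by_cases hl : (j', b') = (j, b)
      · obtain ⟨rfl, rfl⟩ := Prod.mk.inj hl
        simp only [falseLitPot, hmem, ↓reduceIte]
        omega
      · simp only [falseLitPot, hl, ↓reduceIte] at hy ⊢
        split_ifs <;> omega
    · simp only [falseLitPot]
      split_ifs <;> omega
    · by_cases hj : j' = j
      · subst hj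
        cases b <;> cases b' <;> simp [falseLitPot]
      · simp [falseLitPot, hj]
  | u i =>
    rcases GC.adj_u_cases hxy with ⟨occ, k, rfl, hk, rfl⟩ | ⟨t, -, rfl⟩ <;>
      simp only [falseLitPot] <;> split_ifs <;> omega
  | v j' b' =>
    by_cases hj : j' = j
    · subst hj
      rcases GC.adj_v_cases hxy with rfl | ⟨t, ht, rfl⟩ | ⟨occ, k, ho, hk, rfl⟩
      · cases b <;> cases b' <;> simp [falseLitPot]
      · cases b <;> cases b' <;> simp [falseLitPot, ht] <;> split_ifs <;> omega
      · cases b <;> cases b' <;> simp [falseLitPot, ho] <;> omega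
    · exact hy.trans (by simp [falseLitPot, hj])
  | w t => simp only [rank] at hx; split_ifs at hx <;> omega

lemma ncard_reachSet_v_le_six_of_ne (hr : 0 < r) {j : Fin φ.n} {b : Bool} (hA : A j ≠ b) :
    (reachSet (GC r φ) (satOrder r A) r (.v j b)).ncard ≤ 6 := by
  refine (ncard_reachSet_satOrder_le (falseLitPot_lipschitz hr j b) (by simp [falseLitPot])
    (T := (litCliqueNbrs b ∪ litCliqueNbrs !b).image .w) fun z hrank hne hz => ?_).trans ?_
  · simp only [rank, hA, ↓reduceIte] at hrank
    cases z with
    | s occ k => have := k.isLt; simp only at hrank; omega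
    | u i => simp only at hrank; omega
    | v j' b' =>
      simp only [falseLitPot] at hz
      split_ifs at hz with hj hb
      · exact absurd (by rw [hj, hb]) hne
      · subst hj
        have : A j' = b' := by cases b <;> cases b' <;> cases h : A j' <;> simp_all
        simp [this] at hrank
      · omega
    | w t =>
      simp only [falseLitPot] at hz
      split_ifs at hz with h h'
      · simp [h]
      · simp [h']
      · omega
  · exact Finset.card_image_le.trans <| (Finset.card_union_le _ _).trans
      (by rw [card_litCliqueNbrs, card_litCliqueNbrs])

def clausePot (i : Fin φ.m) : VtxC r φ → ℕ
  | .s occ k => if occ.1 = i then k + 1 else r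
  | .u i' => if i' = i then 0 else r + 1
  | .v j b => if (j, b) ∈ φ.clauses i then r else r + 1
  | .w t => if t ∈ φ.clauseCliqueNbrs i then 1 else r + 1

lemma clausePot_lipschitz (i : Fin φ.m) (x y : VtxC r φ) (hxy : (GC r φ).Adj x y)
    (hx : rank A x ≤ rank A (.u i : VtxC r φ)) : clausePot i y ≤ clausePot i x + 1 := by
  cases x with
  | s occ k =>
    have hk := k.isLt
    rcases GC.adj_s_cases hxy with ⟨hk0, rfl⟩ | ⟨k', hk', rfl⟩ | ⟨hk1, rfl⟩
    · simp only [clausePot]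
      split_ifs <;> omega
    · simp only [clausePot]
      split_ifs <;> omega
    · by_cases ho : occ.1 = i
      · simp only [clausePot, ← ho, occ.2.2, ↓reduceIte]
        omega
      · simp only [clausePot, ho, ↓reduceIte]
        split_ifs <;> omega
  | u i' =>
    rcases GC.adj_u_cases hxy with ⟨occ, k, rfl, hk, rfl⟩ | ⟨t, ht, rfl⟩
    · simp only [clausePot]
      split_ifs <;> omega
    · simp only [clausePot]
      split_ifs <;> simp_all
  | v j b =>
    rcases GC.adj_v_cases hxy with rfl | ⟨t, -, rfl⟩ | ⟨occ, k, -, hk, rfl⟩ <;>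
      simp only [clausePot] <;> split_ifs <;> omega
  | w t => simp only [rank] at hx; omega

lemma TC3SAT.Sat.card_filter_ne_lt_card (hA : φ.Sat A) (i : Fin φ.m) :
    ((φ.clauses i).filter fun l => A l.1 ≠ l.2).card < (φ.clauses i).card := by
  obtain ⟨l, hl, hlA⟩ := hA i
  exact Finset.card_lt_card (Finset.filter_ssubset.2 ⟨l, hl, not_not.2 hlA⟩)

lemma ncard_reachSet_u_le_six (hA : φ.Sat A) (i : Fin φ.m) :
    (reachSet (GC r φ) (satOrder r A) r (.u i)).ncard ≤ 6 := by
  refine (ncard_reachSet_satOrder_le (clausePot_lipschitz i) (by simp [clausePot])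
    (T := (φ.clauseCliqueNbrs i).image .w ∪
      ((φ.clauses i).filter fun l => A l.1 ≠ l.2).image fun l => .v l.1 l.2)
    fun z hrank hne hz => ?_).trans ?_
  · simp only [rank] at hrank
    cases z with
    | s occ k => have := k.isLt; simp only at hrank; omega
    | u i' =>
      simp only [clausePot] at hz
      split_ifs at hz with h
      · exact absurd (by rw [h]) hne
      · omega
    | v j b =>
      simp only [clausePot] at hz
      split_ifs at hz with h
      · simp only at hrank
        split_ifs at hrank with hb
        · omega
        · simp [h, hb]
      · omega
    | w t =>
      simp only [clausePot] at hz
      split_ifs at hz with h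
      · simp [h]
      · omega
  · have hW := (Finset.card_image_le (f := (.w : Fin 7 → VtxC r φ))).trans
      (φ.card_clauseCliqueNbrs i).le
    have hF := (Finset.card_image_le
      (f := fun l : Fin φ.n × Bool => (.v l.1 l.2 : VtxC r φ))).trans_lt
      (hA.card_filter_ne_lt_card i)
    have := φ.clause_le_three i
    refine (Finset.card_union_le _ _).trans ?_
    split_ifs at hW <;> omega

end ColoringOrder

lemma ncard_reachSet_satOrder_le_six {r : ℕ} (hr : 0 < r) {φ : TC3SAT} {A : Fin φ.n → Bool}
    (hA : φ.Sat A) (a : VtxC r φ) : (reachSet (GC r φ) (satOrder r A) r a).ncard ≤ 6 := by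
  cases a with
  | u i => exact ncard_reachSet_u_le_six hA i
  | v j b =>
    by_cases hb : A j = b
    exacts [ncard_reachSet_v_le_six_of_eq hb, ncard_reachSet_v_le_six_of_ne hr hb]
  | w t => exact ncard_reachSet_w_le_six t
  | s occ t => exact (ncard_reachSet_s_le_three occ t).trans (by norm_num)

/-- If the 2-Clause 3-SAT instance `φ` is satisfiable, then (for `r ≥ 2`) the reduction
graph `G(φ)` has `r`-coloring number at most 6. -/
theorem sat_implies_colr_le_six (r : ℕ) (hr : 2 ≤ r) (φ : TC3SAT) (hsat : φ.Satisfiable) :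
    colNum (GC r φ) r ≤ 6 := by
  obtain ⟨A, hA⟩ := hsat
  exact (ciInf_le (OrderBot.bddBelow _) (satOrder r A)).trans
    (Finset.sup_le fun a _ => ncard_reachSet_satOrder_le_six (by omega) hA a)
end

section
/- For every k ≥ 2 and r ≥ 1, if T is a finite rooted tree in which the root has at most k children and every non-root vertex has at most k−1 children, and every leaf has depth at most r, then Σ over leaves w of (k−1)^{r−depth(w)} ≤ k·(k−1)^{r−1}. -/
/-!
Let `N d` be the number of vertices at depth `d` and `L d` the number of leaves among them.
Every vertex at depth `d + 1` is a child of a non-leaf at depth `d`, so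
`N (d + 1) ≤ (k - 1) (N d - L d)` for `d ≥ 1`, and `N 1 ≤ k (1 - L 0)` at the root. Hence the
potential `∑_{j < d} L j (k-1)^(r-j) + N d (k-1)^(r-d)` does not increase from `d = 1`, where
it is at most `k (k-1)^(r-1)`, up to `d = r`, where it dominates the sum over all leaves.
-/

open Finset

theorem sum_range_add_mul_pow_le_of_level_bounds {a r : ℕ} {N L : ℕ → ℕ}
    (hroot : N 1 + (a + 1) * L 0 ≤ a + 1)
    (hstep : ∀ d, 1 ≤ d → N (d + 1) + a * L d ≤ a * N d) (d : ℕ) (hd : 1 ≤ d) :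
    d ≤ r → ∑ j ∈ range d, L j * a ^ (r - j) + N d * a ^ (r - d) ≤ (a + 1) * a ^ (r - 1) := by
  induction d, hd using Nat.le_induction with
  | base =>
    intro hr
    have hpow : a ^ r = a * a ^ (r - 1) := by rw [← pow_succ']; congr 1; omega
    calc ∑ j ∈ range 1, L j * a ^ (r - j) + N 1 * a ^ (r - 1)
        = (a * L 0 + N 1) * a ^ (r - 1) := by rw [sum_range_one, Nat.sub_zero, hpow]; ring
      _ ≤ (a + 1) * a ^ (r - 1) := Nat.mul_le_mul_right _ (by nlinarith)
  | succ d hd ih =>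
    intro hdr
    have hpow : a ^ (r - d) = a * a ^ (r - (d + 1)) := by rw [← pow_succ']; congr 1; omega
    calc ∑ j ∈ range (d + 1), L j * a ^ (r - j) + N (d + 1) * a ^ (r - (d + 1))
        = ∑ j ∈ range d, L j * a ^ (r - j) + (N (d + 1) + a * L d) * a ^ (r - (d + 1)) := by
          rw [sum_range_succ, hpow]; ring
      _ ≤ ∑ j ∈ range d, L j * a ^ (r - j) + a * N d * a ^ (r - (d + 1)) := by
          gcongr; exact hstep d hd
      _ = ∑ j ∈ range d, L j * a ^ (r - j) + N d * a ^ (r - d) := by rw [hpow]; ring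
      _ ≤ (a + 1) * a ^ (r - 1) := ih (by omega)

theorem sum_range_mul_pow_le_of_level_bounds {a r : ℕ} (hr : 1 ≤ r) {N L : ℕ → ℕ}
    (hLN : L r ≤ N r) (hroot : N 1 + (a + 1) * L 0 ≤ a + 1)
    (hstep : ∀ d, 1 ≤ d → N (d + 1) + a * L d ≤ a * N d) :
    ∑ d ∈ range (r + 1), L d * a ^ (r - d) ≤ (a + 1) * a ^ (r - 1) := by
  calc ∑ d ∈ range (r + 1), L d * a ^ (r - d)
      ≤ ∑ j ∈ range r, L j * a ^ (r - j) + N r * a ^ (r - r) := by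
        rw [sum_range_succ]; gcongr
    _ ≤ (a + 1) * a ^ (r - 1) :=
        sum_range_add_mul_pow_le_of_level_bounds hroot hstep r hr le_rfl

namespace RootedTree

variable {T : Type*} {root : T} {parent : T → T} {depth : T → ℕ}

theorem eq_root_of_depth_eq_zero (hdepth_parent : ∀ x, x ≠ root → depth x = depth (parent x) + 1)
    {x : T} (hx : depth x = 0) : x = root := by
  by_contra h
  have := hdepth_parent x h
  omega

variable [Fintype T] (root parent depth)

open Classical in
noncomputable def children (x : T) : Finset T := {y | y ≠ root ∧ parent y = x}

open Classical in
noncomputable def leaves : Finset T := {x | children root parent x = ∅}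

def level (d : ℕ) : Finset T := {x | depth x = d}

theorem coe_children (x : T) :
    (children root parent x : Set T) = {y | y ≠ root ∧ parent y = x} := by
  ext; simp [children]

variable {root parent depth}

theorem level_zero (hdepth_root : depth root = 0)
    (hdepth_parent : ∀ x, x ≠ root → depth x = depth (parent x) + 1) :
    level depth 0 = {root} := by
  ext x
  simp only [level, mem_filter, mem_univ, true_and, mem_singleton]
  exact ⟨eq_root_of_depth_eq_zero hdepth_parent, fun h => h ▸ hdepth_root⟩

theorem card_level_succ_add_mul_le (hdepth_root : depth root = 0)
    (hdepth_parent : ∀ x, x ≠ root → depth x = depth (parent x) + 1) {d c : ℕ}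
    (hc : ∀ x, depth x = d → #(children root parent x) ≤ c) :
    #(level depth (d + 1)) + c * #{x ∈ leaves root parent | depth x = d} ≤
      c * #(level depth d) := by
  classical
  set inner := {x ∈ level depth d | x ∉ leaves root parent}
  have hsplit : #{x ∈ leaves root parent | depth x = d} + #inner = #(level depth d) := by
    rw [← card_filter_add_card_filter_not (· ∈ leaves root parent) (s := level depth d)]
    congr 2
    ext x; simp [level, and_comm]
  have hcover : #(level depth (d + 1)) ≤ c * #inner := by
    have hchild : ∀ y ∈ level depth (d + 1), y ∈ children root parent (parent y) ∧
        depth (parent y) = d := by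
      intro y hy
      simp only [level, mem_filter, mem_univ, true_and] at hy
      have hy_root : y ≠ root := fun h => by simp [h, hdepth_root] at hy
      have := hdepth_parent y hy_root
      exact ⟨by simp [children, hy_root], by omega⟩
    refine card_le_mul_card_image_of_maps_to (f := parent) (fun y hy => ?_) c (fun x hx => ?_)
    · obtain ⟨hmem, hd⟩ := hchild y hy
      simp only [inner, leaves, level, mem_filter, mem_univ, true_and]
      exact ⟨hd, fun h => by simp [h] at hmem⟩
    · simp only [inner, level, mem_filter, mem_univ, true_and] at hx
      refine (card_le_card fun y hy => ?_).trans (hc x hx.1)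
      rw [mem_filter] at hy
      exact hy.2 ▸ (hchild y hy.1).1
  rw [← hsplit]
  nlinarith

end RootedTree

open RootedTree in
theorem tree_leaf_weight_bound_general (k r : ℕ) (hk : 2 ≤ k) (hr : 1 ≤ r)
    (T : Type*) [Fintype T] (root : T) (parent : T → T) (depth : T → ℕ)
    (hdepth_root : depth root = 0)
    (hdepth_parent : ∀ x, x ≠ root → depth x = depth (parent x) + 1)
    (hroot_children : {y | y ≠ root ∧ parent y = root}.ncard ≤ k)
    (hchildren : ∀ x, x ≠ root → {y | y ≠ root ∧ parent y = x}.ncard ≤ k - 1)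
    (hleaf_depth : ∀ w, {y | y ≠ root ∧ parent y = w} = ∅ → depth w ≤ r) :
    (∑ᶠ w ∈ {w : T | {y | y ≠ root ∧ parent y = w} = ∅}, (k - 1) ^ (r - depth w)) ≤
      k * (k - 1) ^ (r - 1) := by
  simp_rw [← coe_children, Set.ncard_coe_finset, Finset.coe_eq_empty] at *
  have hleaves : {w : T | children root parent w = ∅} = ↑(leaves root parent) := by
    ext; simp [leaves]
  have hk1 : k - 1 + 1 = k := by omega
  rw [hleaves, finsum_mem_coe_finset,
    ← sum_fiberwise_of_maps_to' (t := range (r + 1)) (g := depth) (f := fun d => (k - 1) ^ (r - d))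
      (fun w hw => mem_range_succ_iff.mpr (hleaf_depth w (by simpa [leaves] using hw)))]
  simp_rw [sum_const, smul_eq_mul]
  rw [← hk1]
  refine sum_range_mul_pow_le_of_level_bounds (N := fun d => #(level depth d)) hr
    (card_le_card fun x hx => by simp_all [level]) ?_ fun d hd => ?_
  · have := card_level_succ_add_mul_le hdepth_root hdepth_parent (d := 0) (c := k)
      fun x hx => eq_root_of_depth_eq_zero hdepth_parent hx ▸ hroot_children
    rwa [level_zero hdepth_root hdepth_parent, card_singleton, mul_one, ← hk1] at this
  · exact card_level_succ_add_mul_le hdepth_root hdepth_parent fun x hx =>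
      hchildren x fun h => by simp [h, hdepth_root] at hx; omega

/-- In a finite rooted tree (given by a parent function and consistent depth function)
where the root has at most `k` children, every non-root vertex has at most `k - 1`
children, and every leaf has depth at most `r`, the sum over leaves `w` of
`(k-1)^(r - depth w)` is at most `k * (k-1)^(r-1)`. -/
theorem tree_leaf_weight_bound (k r : ℕ) (hk : 2 ≤ k) (hr : 1 ≤ r)
    (T : Type*) [Fintype T] (root : T) (parent : T → T) (depth : T → ℕ)
    (hdepth_root : depth root = 0)
    (hparent_root : parent root = root)
    (hdepth_parent : ∀ x, x ≠ root → depth x = depth (parent x) + 1)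
    (hroot_children : {y | y ≠ root ∧ parent y = root}.ncard ≤ k)
    (hchildren : ∀ x, x ≠ root → {y | y ≠ root ∧ parent y = x}.ncard ≤ k - 1)
    (hleaf_depth : ∀ w, {y | y ≠ root ∧ parent y = w} = ∅ → depth w ≤ r) :
    (∑ᶠ w ∈ {w : T | {y | y ≠ root ∧ parent y = w} = ∅}, (k - 1) ^ (r - depth w)) ≤
      k * (k - 1) ^ (r - 1) :=
  tree_leaf_weight_bound_general k r hk hr T root parent depth hdepth_root hdepth_parent
    hroot_children hchildren hleaf_depth
end
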